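/- There exists a polymatrix coordination game with individual preferences on two players in which the strategy profile implemented by the unique subgame perfect equilibrium of the sequential-move game is not a Nash equilibrium of the simultaneous-move game. Concretely: players u, v each choose 'coordinate' or 'selfish'; q^{uv}(c_u,c_v)=4, q^{uv}(s_u,c_v)=2, q^{uv}(·,s_v)=0; q^u(s_u)=q^v(s_v)=3 and q^u(c_u)=q^v(c_v)=0. In the sequential game where u moves first, the unique subgame perfect equilibrium implements (c_u, c_v), but u's payoff there is 4 while deviating to s_u gives payoff 5, so (c_u, c_v) is not a Nash equilibrium. -/
import Mathlib


/- Strategies: `true` = coordinate (`c`), `false` = play selfishly (`s`). -/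

/-- The common bimatrix payoff: `q^{uv}(c,c) = 4`, `q^{uv}(s,c) = 2`, `q^{uv}(·,s) = 0`. -/
def exQ (a b : Bool) : ℝ := if b then (if a then 4 else 2) else 0

/-- Player `u`'s individual preference: `q^u(s) = 3`, `q^u(c) = 0`. -/
def exqu (a : Bool) : ℝ := if a then 0 else 3

/-- Player `v`'s individual preference: `q^v(s) = 3`, `q^v(c) = 0`. -/
def exqv (b : Bool) : ℝ := if b then 0 else 3

/-- Payoff of `u` when `u` plays `a` and `v` plays `b`. -/
def exPu (a b : Bool) : ℝ := exqu a + exQ a b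

/-- Payoff of `v` when `u` plays `a` and `v` plays `b`. -/
def exPv (a b : Bool) : ℝ := exqv b + exQ a b

/-- `v`'s subgame perfect response to `u`'s move: coordinate iff `u` coordinates. -/
def exBr (a : Bool) : Bool := a

/-- There is a two-player polymatrix coordination game with individual
preferences in which the profile implemented by the unique subgame perfect equilibrium of
the sequential-move game (with `u` moving first) is not a Nash equilibrium of the
simultaneous-move game: `exBr` is `v`'s unique best response to each move of `u`,
`u`'s unique optimal move against `exBr` is to coordinate, so the SPE implements `(c,c)` with
payoff `4` for `u`; but `u` gains by deviating to selfish, obtaining `5`. -/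
theorem spe_profile_not_nash :
    -- `exBr a` is `v`'s unique best response to each `a`:
    (∀ a b : Bool, exPv a b ≤ exPv a (exBr a)) ∧
    (∀ a b : Bool, b ≠ exBr a → exPv a b < exPv a (exBr a)) ∧
    -- coordinating is `u`'s unique optimal first move given `v`'s responses:
    (∀ a : Bool, exPu a (exBr a) ≤ exPu true (exBr true)) ∧
    (∀ a : Bool, a ≠ true → exPu a (exBr a) < exPu true (exBr true)) ∧
    -- the implemented profile is `(c,c)` with `exPu true true = 4`,
    -- but it is not a Nash equilibrium: `u` profits from deviating to selfish
    exBr true = true ∧ exPu true true = 4 ∧ exPu false true = 5 ∧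
    exPu true true < exPu false true := by
  refine ⟨?_,?_,?_,?_,rfl,?_,?_,?_⟩ <;>
    first
      | (intro a b; cases a <;> cases b <;> norm_num [exPv, exPu, exQ, exqv, exqu, exBr])
      | (intro a h; cases a <;> norm_num [exPv, exPu, exQ, exqv, exqu, exBr] at h ⊢ <;> simp_all)
      | (intro a; cases a <;> norm_num [exPv, exPu, exQ, exqv, exqu, exBr])
      | norm_num [exPv, exPu, exQ, exqv, exqu, exBr]
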